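/- arXiv:math/0606744 — 3 statements merged into one kernel-verified Lean document; each statement's English description precedes it below -/
import Mathlib

section
/- Consider the perturbed form ω_ε = (Φ_ε)_*(z dw − λ w dz) where Φ_ε(z,w) = (α(ε), β(ε)) + (z,w) + ε·O(z,w) with α'(0), β'(0) ≠ 0. Then for every δ > 0 there exist c > 0 and ε₀ > 0 such that for all 0 < |ε| < ε₀, at every point of the bidisc D₁ = {|z| ≤ c|ε|, |w| ≤ c|ε|} the slope dw/dz of the leaves of the perturbed foliation satisfies |dw/dz − λ·β'(0)/α'(0)| < δ. -/
set_option maxHeartbeats 1000000 in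
/-- For the perturbed foliation `ω_ε = (Φ_ε)_*(z dw − λ w dz)` with
`Φ_ε(z,w) = (α(ε), β(ε)) + (z,w) + εO(z,w)`, `A = α'(0) ≠ 0`, `B = β'(0) ≠ 0`, the
leaves satisfy `dw/dz = λ(w − Bε + O(ε²))/(z − Aε + O(ε²))`.  For every `δ > 0` there are
`c > 0` and `ε₀ > 0` such that for all `0 < |ε| < ε₀` and all `(z,w)` in the bidisc
`D₁ = {|z| ≤ c|ε|, |w| ≤ c|ε|}`, the slope satisfies `|dw/dz − λB/A| < δ`. -/
theorem stmt_9 (lam A B : ℂ) (hA : A ≠ 0) (hB : B ≠ 0) (K : ℝ)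
    (E₁ E₂ : ℝ → ℂ)
    (hE₁ : ∀ ε : ℝ, ‖E₁ ε‖ ≤ K * ε ^ 2)
    (hE₂ : ∀ ε : ℝ, ‖E₂ ε‖ ≤ K * ε ^ 2) :
    ∀ δ : ℝ, 0 < δ → ∃ c : ℝ, 0 < c ∧ ∃ ε₀ : ℝ, 0 < ε₀ ∧
      ∀ ε : ℝ, 0 < |ε| → |ε| < ε₀ →
        ∀ z w : ℂ, ‖z‖ ≤ c * |ε| → ‖w‖ ≤ c * |ε| →
          ‖
            (lam * (w - B * (ε : ℂ) + E₂ ε) / (z - A * (ε : ℂ) + E₁ ε) - lam * B / A)‖ < δ := by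
  intro δ hδ
  have hK : 0 ≤ K := by
    have h1 := hE₁ 1
    have h0 := norm_nonneg (E₁ 1)
    nlinarith
  set a := ‖A‖ with ha
  set b := ‖B‖ with hb
  have hA0 : 0 < a := norm_pos_iff.mpr hA
  have hb0 : 0 ≤ b := norm_nonneg B
  set M := ‖lam‖ * (a + b) with hMdef
  have hM0 : 0 ≤ M := by positivity
  set c := min (a / 4) (δ * a ^ 2 / (8 * (M + 1))) with hcdef
  set ε₀ := min (a / (4 * (K + 1))) (δ * a ^ 2 / (8 * (K + 1) * (M + 1))) with he0def
  have hc : 0 < c := lt_min (by positivity) (by positivity)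
  have hε₀ : 0 < ε₀ := lt_min (by positivity) (by positivity)
  refine ⟨c, hc, ε₀, hε₀, ?_⟩
  intro ε hε hεε z w hz hw
  set t := |ε| with ht
  have hc1 : c ≤ a / 4 := min_le_left _ _
  have hc2 : c ≤ δ * a ^ 2 / (8 * (M + 1)) := min_le_right _ _
  have he1 : ε₀ ≤ a / (4 * (K + 1)) := min_le_left _ _
  have he2 : ε₀ ≤ δ * a ^ 2 / (8 * (K + 1) * (M + 1)) := min_le_right _ _
  have ht2 : ε ^ 2 = t ^ 2 := (sq_abs ε).symm
  have hEb1 : ‖E₁ ε‖ ≤ K * t ^ 2 := by rw [← ht2]; exact hE₁ ε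
  have hEb2 : ‖E₂ ε‖ ≤ K * t ^ 2 := by rw [← ht2]; exact hE₂ ε
  set D := z - A * (ε : ℂ) + E₁ ε with hDdef
  have hAe : ‖A * (ε : ℂ)‖ = a * t := by
    rw [norm_mul, Complex.norm_real, Real.norm_eq_abs]
  -- lower bound on |D|
  have hDlb : a * t / 2 ≤ ‖D‖ := by
    have htri : ‖A * (ε : ℂ)‖ ≤ ‖z‖ + ‖E₁ ε‖ + ‖D‖ := by
      have : A * (ε : ℂ) = z + E₁ ε - D := by rw [hDdef]; ring
      rw [this]
      calc ‖z + E₁ ε - D‖ ≤ ‖z + E₁ ε‖ + ‖D‖ :=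
            norm_sub_le _ _
        _ ≤ ‖z‖ + ‖E₁ ε‖ + ‖D‖ := by
            have := norm_add_le z (E₁ ε)
            linarith
    rw [hAe] at htri
    -- c * t ≤ a/4 * t,  K * t^2 ≤ a/4 * t
    have h1 : c * t ≤ a / 4 * t := mul_le_mul_of_nonneg_right hc1 (le_of_lt hε)
    have h2 : K * t ^ 2 ≤ a / 4 * t := by
      have hKt : K * t ≤ (K + 1) * ε₀ := by nlinarith
      have : (K + 1) * ε₀ ≤ a / 4 := by
        rw [div_mul_eq_div_div] at he1
        calc (K + 1) * ε₀ ≤ (K + 1) * (a / 4 / (K + 1)) := by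
              apply mul_le_mul_of_nonneg_left he1 (by linarith)
          _ = a / 4 := by field_simp
      nlinarith
    nlinarith
  have hDpos : 0 < ‖D‖ := lt_of_lt_of_le (by positivity) hDlb
  have hDne : D ≠ 0 := fun h => by simp [h] at hDpos
  -- rewrite the expression
  have hkey : lam * (w - B * (ε : ℂ) + E₂ ε) / D - lam * B / A
      = lam * (A * w + A * E₂ ε - B * z - B * E₁ ε) / (A * D) := by
    rw [div_sub_div _ _ hDne hA, mul_comm D A]
    congr 1
    rw [hDdef]; ring
  rw [hkey, norm_div, norm_mul, norm_mul]
  set N := A * w + A * E₂ ε - B * z - B * E₁ ε with hNdef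
  have hNlb : ‖N‖ ≤ (a + b) * (c * t + K * t ^ 2) := by
    calc ‖N‖ ≤ ‖A * w + A * E₂ ε‖ + ‖B * z + B * E₁ ε‖ := by
          have : N = (A * w + A * E₂ ε) - (B * z + B * E₁ ε) := by rw [hNdef]; ring
          rw [this]; exact norm_sub_le _ _
      _ ≤ (‖A * w‖ + ‖A * E₂ ε‖)
          + (‖B * z‖ + ‖B * E₁ ε‖) := by
          have h1 := norm_add_le (A * w) (A * E₂ ε)
          have h2 := norm_add_le (B * z) (B * E₁ ε)
          linarith
      _ ≤ (a + b) * (c * t + K * t ^ 2) := by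
          rw [norm_mul, norm_mul, norm_mul, norm_mul]
          have h1 : a * ‖w‖ ≤ a * (c * t) :=
            mul_le_mul_of_nonneg_left hw (le_of_lt hA0)
          have h2 : a * ‖E₂ ε‖ ≤ a * (K * t ^ 2) :=
            mul_le_mul_of_nonneg_left hEb2 (le_of_lt hA0)
          have h3 : b * ‖z‖ ≤ b * (c * t) :=
            mul_le_mul_of_nonneg_left hz hb0
          have h4 : b * ‖E₁ ε‖ ≤ b * (K * t ^ 2) :=
            mul_le_mul_of_nonneg_left hEb1 hb0
          nlinarith
  rw [div_lt_iff₀ (by positivity : (0 : ℝ) < a * ‖D‖)]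
  -- goal: |lam| * |N| < δ * (a * |D|)
  have hlam0 : 0 ≤ ‖lam‖ := norm_nonneg lam
  have hstep1 : ‖lam‖ * ‖N‖ ≤ M * (c * t + K * t ^ 2) := by
    calc ‖lam‖ * ‖N‖ ≤ ‖lam‖ * ((a + b) * (c * t + K * t ^ 2)) :=
          mul_le_mul_of_nonneg_left hNlb hlam0
      _ = M * (c * t + K * t ^ 2) := by rw [hMdef]; ring
  have hstep2 : δ * (a * (a * t / 2)) ≤ δ * (a * ‖D‖) := by
    apply mul_le_mul_of_nonneg_left _ (le_of_lt hδ)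
    exact mul_le_mul_of_nonneg_left hDlb (le_of_lt hA0)
  have hfin : M * (c * t + K * t ^ 2) < δ * (a * (a * t / 2)) := by
    have hb1 : M * c ≤ δ * a ^ 2 / 8 := by
      have : (M + 1) * c ≤ δ * a ^ 2 / 8 := by
        rw [div_mul_eq_div_div] at hc2
        calc (M + 1) * c ≤ (M + 1) * (δ * a ^ 2 / 8 / (M + 1)) :=
              mul_le_mul_of_nonneg_left hc2 (by linarith)
          _ = δ * a ^ 2 / 8 := by field_simp
      nlinarith
    have hb2 : M * (K * t) < δ * a ^ 2 / 8 := by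
      have hKt : (K + 1) * (M + 1) * ε₀ ≤ δ * a ^ 2 / 8 := by
        rw [div_mul_eq_div_div, div_mul_eq_div_div] at he2
        calc (K + 1) * (M + 1) * ε₀ ≤ (K + 1) * (M + 1) * (δ * a ^ 2 / 8 / (K + 1) / (M + 1)) := by
              apply mul_le_mul_of_nonneg_left he2 (by positivity)
          _ = δ * a ^ 2 / 8 := by field_simp
      have h1 : M * (K * t) < (K + 1) * (M + 1) * ε₀ := by
        have ha1 : M * K * t ≤ M * K * ε₀ :=
          mul_le_mul_of_nonneg_left hεε.le (mul_nonneg hM0 hK)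
        have ha2 : 0 < (K + M + 1) * ε₀ := mul_pos (by linarith) hε₀
        nlinarith
      linarith
    have hb1' : M * c * t ≤ δ * a ^ 2 / 8 * t := mul_le_mul_of_nonneg_right hb1 hε.le
    have hb2' : M * (K * t) * t < δ * a ^ 2 / 8 * t := mul_lt_mul_of_pos_right hb2 hε
    nlinarith [mul_pos (mul_pos hδ (pow_pos hA0 2)) hε]
  calc ‖lam‖ * ‖N‖ ≤ M * (c * t + K * t ^ 2) := hstep1
    _ < δ * (a * (a * t / 2)) := hfin
    _ ≤ δ * (a * ‖D‖) := hstep2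
end

section
/- (Localization of intersections near the diagonal region) Let λ = a+ib, b > 0, and let Φ_ε(z,w) = (α(ε),β(ε)) + (z,w) + εO(z,w) with the perturbation bounded by σ|ε| on the δ-bidisc. Let S > 0 satisfy |ε|/S < |α(ε)| − σ|ε|, |β(ε)| − σ|ε| and |α(ε)| + σ|ε|, |β(ε)| + σ|ε| < S. Suppose a point (z,w) with C|ε| < |z|, |w| < δ lies both on a leaf L_α with parameter ζ = u+iv (so z = e^{i(ζ + (log|α|)/b)}, w = αe^{iλ(ζ+(log|α|)/b)}) and on Φ_ε(L_β) with parameter ζ' = ζ + c + id. Then |d| < 2S e^{v}|ε| ≤ 2S/C and |c| ≤ (1/b)(2S e^{bu+av}|ε| + 2|a| S e^{v}|ε|) ≤ 2S(1+|a|)/(Cb); hence |ζ' − ζ| ≤ (2S/C)(1 + (1+|a|)/b). In particular, if C is large enough then the plaque indices satisfy |m − n| ≤ 1, where 2nπ < u < 2(n+1)π and 2mπ < u' < 2(m+1)π. -/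
set_option maxHeartbeats 800000 in
lemma auxA (t : ℝ) (h : |1 - Real.exp (-t)| < 1/2) : |t| ≤ 2 * |1 - Real.exp (-t)| := by
  rcases le_or_gt t 0 with ht | ht
  · have h1 : 1 - t ≤ Real.exp (-t) := by
      have := Real.add_one_le_exp (-t); linarith
    have : |1 - Real.exp (-t)| = Real.exp (-t) - 1 := by
      rw [abs_sub_comm, abs_of_nonneg]; linarith
    rw [this, abs_of_nonpos ht]; linarith
  · have ht1 : t ≤ 1 := by
      by_contra h1
      push_neg at h1
      have h2 : Real.exp (-t) < Real.exp (-1) := by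
        apply Real.exp_lt_exp.mpr; linarith
      have he : Real.exp (-1) < 1/2 := by
        rw [Real.exp_neg]
        rw [inv_lt_comm₀ (Real.exp_pos 1) (by norm_num)]
        calc (1/2 : ℝ)⁻¹ = 2 := by norm_num
        _ < Real.exp 1 := by
          have := Real.exp_one_gt_d9; linarith
      have hle : Real.exp (-t) < 1 := by
        calc Real.exp (-t) < Real.exp (-1) := h2
        _ < 1 := by linarith
      have habs : |1 - Real.exp (-t)| = 1 - Real.exp (-t) := by
        rw [abs_of_nonneg]; linarith
      rw [habs] at h
      linarith
    have hexp : Real.exp (-t) ≤ 1 / (1 + t) := by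
      have h1 : (1:ℝ) + t ≤ Real.exp t := by linarith [Real.add_one_le_exp t]
      have h2 : (0:ℝ) < 1 + t := by linarith
      rw [Real.exp_neg, inv_le_comm₀ (Real.exp_pos t) (by positivity)]
      calc (1/(1+t))⁻¹ = 1 + t := by field_simp
      _ ≤ Real.exp t := h1
    have hle : Real.exp (-t) < 1 := by
      rw [Real.exp_lt_one_iff]; linarith
    have habs : |1 - Real.exp (-t)| = 1 - Real.exp (-t) := by
      rw [abs_of_nonneg]; linarith
    rw [habs, abs_of_pos ht]
    have h3 : t / (1+t) ≤ 1 - Real.exp (-t) := by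
      have h4 : 1 - 1/(1+t) = t/(1+t) := by field_simp; ring
      linarith [hexp, h4]
    have h2 : t / 2 ≤ t / (1+t) := by
      apply div_le_div_of_nonneg_left (le_of_lt ht) (by linarith) (by linarith)
    linarith

lemma leaf_abs1 (u v t : ℝ) :
    ‖Complex.exp (Complex.I * (((u:ℂ) + (v:ℂ)*Complex.I) + (t:ℂ)))‖ = Real.exp (-v) := by
  rw [Complex.norm_exp]
  congr 1
  simp [Complex.mul_re, Complex.mul_im]

lemma leaf_abs2 (a b u v : ℝ) (hb : b ≠ 0) (α : ℂ) (hα : 0 < ‖α‖) :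
    ‖α * Complex.exp (Complex.I * ((a:ℂ) + (b:ℂ)*Complex.I) *
      (((u:ℂ) + (v:ℂ)*Complex.I) + ((Real.log (‖α‖) / b : ℝ) : ℂ)))‖ =
    Real.exp (-(b*u) - a*v) := by
  rw [norm_mul, Complex.norm_exp]
  set t := Real.log (‖α‖) / b
  have hre : (Complex.I * ((a:ℂ) + (b:ℂ)*Complex.I) *
      (((u:ℂ) + (v:ℂ)*Complex.I) + ((t:ℝ):ℂ))).re = -(b*(u+t)) - a*v := by
    simp [Complex.mul_re, Complex.mul_im]
  rw [hre]
  have hbt : b * t = Real.log (‖α‖) := by simp only [t]; field_simp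
  rw [show -(b*(u+t)) - a*v = -(b*t) + (-(b*u) - a*v) by ring, Real.exp_add,
    hbt, Real.exp_neg, Real.exp_log hα]
  field_simp

lemma factor_abs (x t : ℝ) :
    |Real.exp x - Real.exp (x + t)| = Real.exp x * |1 - Real.exp t| := by
  rw [Real.exp_add, ← mul_one_sub, abs_mul, abs_of_pos (Real.exp_pos x)]

lemma conv1 {Y X s : ℝ} (h : Real.exp (-Y) * X < s) : X < Real.exp Y * s := by
  have h2 := mul_lt_mul_of_pos_left h (Real.exp_pos Y)
  rwa [← mul_assoc, ← Real.exp_add, add_neg_cancel, Real.exp_zero, one_mul] at h2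

lemma conv2 {Y e C : ℝ} (hC : 0 < C) (h : C * e < Real.exp (-Y)) :
    Real.exp Y * e < 1 / C := by
  have h2 := mul_lt_mul_of_pos_right h (Real.exp_pos Y)
  rw [← Real.exp_add, neg_add_cancel, Real.exp_zero] at h2
  rw [lt_div_iff₀ hC]
  calc Real.exp Y * e * C = C * e * Real.exp Y := by ring
  _ < 1 := h2

set_option maxHeartbeats 800000 in
/-- **Localization of intersections in `R₁`.**
Let `λ = a + ib`, `b > 0`, and let `Φ_ε` be a perturbation which, on the `δ`-bidisc, moves
points by `(α(ε), β(ε)) + O(σ|ε|)`, with `|ε|/S < |α(ε)| − σ|ε|, |β(ε)| − σ|ε|` and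
`|α(ε)| + σ|ε|, |β(ε)| + σ|ε| < S|ε|`.  There is `C₀ > 0` (depending only on `a, b, S`)
such that for all `C ≥ C₀`: if a point `(z,w)` with `C|ε| < |z|, |w| < δ` lies on the leaf
`L_α` with parameter `ζ = u + iv` and also on `Φ_ε(L_β)` with parameter `ζ' = ζ + c + id`,
then `|d| < 2S e^{v}|ε| ≤ 2S/C`,
`|c| ≤ (1/b)(2S e^{bu+av}|ε| + 2|a|S e^{v}|ε|) ≤ 2S(1+|a|)/(Cb)`, hence
`|ζ' − ζ| ≤ (2S/C)(1 + (1+|a|)/b)`; and the plaque indices `n, m`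
(`2nπ < u < 2(n+1)π`, `2mπ < u' < 2(m+1)π`, `u' = u + c`) satisfy `|m − n| ≤ 1`. -/
theorem stmt_14 (a b : ℝ) (hb : 0 < b) (S : ℝ) (hS : 0 < S) :
    ∃ C₀ : ℝ, 0 < C₀ ∧
      ∀ C δ σ : ℝ, C₀ ≤ C → 0 < δ → 0 ≤ σ →
      ∀ ε : ℝ, ε ≠ 0 →
      ∀ (Φ : ℂ × ℂ → ℂ × ℂ) (αε βε : ℂ),
        (∀ p : ℂ × ℂ, ‖p.1‖ ≤ δ → ‖p.2‖ ≤ δ →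
          ‖(Φ p).1 - (p.1 + αε)‖ ≤ σ * |ε| ∧
          ‖(Φ p).2 - (p.2 + βε)‖ ≤ σ * |ε|) →
        |ε| / S < ‖αε‖ - σ * |ε| →
        |ε| / S < ‖βε‖ - σ * |ε| →
        ‖αε‖ + σ * |ε| < S * |ε| →
        ‖βε‖ + σ * |ε| < S * |ε| →
      ∀ α β : ℂ,
        Real.exp (-(2 * Real.pi * b)) ≤ ‖α‖ → ‖α‖ < 1 →
        Real.exp (-(2 * Real.pi * b)) ≤ ‖β‖ → ‖β‖ < 1 →
      ∀ u v c d : ℝ, ∀ z w z' w' : ℂ,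
        z = Complex.exp (Complex.I * (((u : ℂ) + (v : ℂ) * Complex.I) +
              ((Real.log (‖α‖) / b : ℝ) : ℂ))) →
        w = α * Complex.exp (Complex.I * ((a : ℂ) + (b : ℂ) * Complex.I) *
              (((u : ℂ) + (v : ℂ) * Complex.I) +
                ((Real.log (‖α‖) / b : ℝ) : ℂ))) →
        z' = Complex.exp (Complex.I * ((((u + c : ℝ) : ℂ) + ((v + d : ℝ) : ℂ) * Complex.I) +
              ((Real.log (‖β‖) / b : ℝ) : ℂ))) →
        w' = β * Complex.exp (Complex.I * ((a : ℂ) + (b : ℂ) * Complex.I) *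
              ((((u + c : ℝ) : ℂ) + ((v + d : ℝ) : ℂ) * Complex.I) +
                ((Real.log (‖β‖) / b : ℝ) : ℂ))) →
        C * |ε| < ‖z‖ → ‖z‖ < δ →
        C * |ε| < ‖w‖ → ‖w‖ < δ →
        ‖z'‖ ≤ δ → ‖w'‖ ≤ δ →
        (z, w) = Φ (z', w') →
        |d| < 2 * S * Real.exp v * |ε| ∧
        2 * S * Real.exp v * |ε| ≤ 2 * S / C ∧
        |c| ≤ (1 / b) * (2 * S * Real.exp (b * u + a * v) * |ε| +
            2 * |a| * S * Real.exp v * |ε|) ∧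
        |c| ≤ 2 * S * (1 + |a|) / (C * b) ∧
        ‖(c : ℂ) + (d : ℂ) * Complex.I‖ ≤ (2 * S / C) * (1 + (1 + |a|) / b) ∧
        (∀ n m : ℤ, 2 * (n : ℝ) * Real.pi < u → u < 2 * ((n : ℝ) + 1) * Real.pi →
          2 * (m : ℝ) * Real.pi < u + c → u + c < 2 * ((m : ℝ) + 1) * Real.pi →
          |m - n| ≤ 1) := by
  have hπ := Real.pi_pos
  refine ⟨2 * S + S * (1 + |a|) / (Real.pi * b) + 1, by positivity, ?_⟩
  intro C δ σ hC0 hδ hσ ε hε Φ αε βε hΦ hα1' hβ1' hα2 hβ2 α β hα1 hαlt hβ1 hβlt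
  intro u v c d z w z' w' hz hw hz' hw' hCz hzδ hCw hwδ hz'δ hw'δ hpoint
  have hεpos : 0 < |ε| := abs_pos.mpr hε
  have hC2S : 2 * S ≤ C := by
    have : 0 ≤ S * (1 + |a|) / (Real.pi * b) := by positivity
    linarith
  have hCpos : 0 < C := by linarith
  have hCa : S * (1 + |a|) / (Real.pi * b) ≤ C := by linarith
  have hSC : S / C ≤ 1 / 2 := by
    rw [div_le_div_iff₀ hCpos (by norm_num)]
    linarith
  -- absolute values of the four points
  have hαpos : 0 < ‖α‖ := lt_of_lt_of_le (Real.exp_pos _) hα1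
  have hβpos : 0 < ‖β‖ := lt_of_lt_of_le (Real.exp_pos _) hβ1
  have hzabs : ‖z‖ = Real.exp (-v) := by rw [hz, leaf_abs1]
  have hz'abs : ‖z'‖ = Real.exp (-(v + d)) := by rw [hz', leaf_abs1]
  have hwabs : ‖w‖ = Real.exp (-(b*u) - a*v) := by
    rw [hw, leaf_abs2 a b u v (ne_of_gt hb) α hαpos]
  have hw'abs : ‖w'‖ = Real.exp (-(b*(u+c)) - a*(v+d)) := by
    rw [hw', leaf_abs2 a b (u+c) (v+d) (ne_of_gt hb) β hβpos]
  -- the perturbation bounds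
  obtain ⟨hΦ1, hΦ2⟩ := hΦ (z', w') hz'δ hw'δ
  rw [← hpoint] at hΦ1 hΦ2
  simp only at hΦ1 hΦ2
  have hzz' : ‖z - z'‖ < S * |ε| := by
    calc ‖z - z'‖ = ‖(z - (z' + αε)) + αε‖ := by ring_nf
    _ ≤ ‖z - (z' + αε)‖ + ‖αε‖ := norm_add_le _ _
    _ < S * |ε| := by linarith
  have hww' : ‖w - w'‖ < S * |ε| := by
    calc ‖w - w'‖ = ‖(w - (w' + βε)) + βε‖ := by ring_nf
    _ ≤ ‖w - (w' + βε)‖ + ‖βε‖ := norm_add_le _ _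
    _ < S * |ε| := by linarith
  -- key estimate for d
  have hd1 : Real.exp (-v) * |1 - Real.exp (-d)| < S * |ε| := by
    rw [← factor_abs]
    calc |Real.exp (-v) - Real.exp (-v + -d)|
        = |‖z‖ - ‖z'‖| := by rw [hzabs, hz'abs]; ring_nf
    _ ≤ ‖z - z'‖ := abs_norm_sub_norm_le z z'
    _ < S * |ε| := hzz'
  have key1 : |1 - Real.exp (-d)| < Real.exp v * (S * |ε|) := conv1 hd1
  rw [show Real.exp v * (S * |ε|) = S * (Real.exp v * |ε|) from by ring] at key1
  have hev : Real.exp v * |ε| < 1 / C := conv2 hCpos (hzabs ▸ hCz)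
  have hew : Real.exp (b*u + a*v) * |ε| < 1 / C := by
    refine conv2 hCpos ?_
    rw [show -(b*u + a*v) = -(b*u) - a*v by ring, ← hwabs]; exact hCw
  have hSev : S * (Real.exp v * |ε|) < S / C := by
    rw [div_eq_mul_one_div S C]
    exact mul_lt_mul_of_pos_left hev hS
  have hSew : S * (Real.exp (b*u + a*v) * |ε|) < S / C := by
    rw [div_eq_mul_one_div S C]
    exact mul_lt_mul_of_pos_left hew hS
  have key1' : |1 - Real.exp (-d)| < 1/2 := by linarith
  have hdbound : |d| < 2 * S * Real.exp v * |ε| := by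
    have h := auxA d key1'
    have he : 2 * S * Real.exp v * |ε| = 2 * (S * (Real.exp v * |ε|)) := by ring
    linarith
  -- key estimate for c
  have hc1 : Real.exp (-(b*u) - a*v) * |1 - Real.exp (-(b*c + a*d))| < S * |ε| := by
    rw [← factor_abs]
    calc |Real.exp (-(b*u) - a*v) - Real.exp (-(b*u) - a*v + -(b*c + a*d))|
        = |‖w‖ - ‖w'‖| := by
          rw [hwabs, hw'abs]
          congr 2
          ring_nf
    _ ≤ ‖w - w'‖ := abs_norm_sub_norm_le w w'
    _ < S * |ε| := hww'
  have key2 : |1 - Real.exp (-(b*c + a*d))| < Real.exp (b*u + a*v) * (S * |ε|) := by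
    have := conv1 (Y := b*u + a*v) (by rw [show -(b*u+a*v) = -(b*u) - a*v by ring]; exact hc1)
    exact this
  rw [show Real.exp (b*u + a*v) * (S * |ε|) = S * (Real.exp (b*u + a*v) * |ε|) from by ring] at key2
  have key2' : |1 - Real.exp (-(b*c + a*d))| < 1/2 := by linarith
  have hbcad : |b*c + a*d| < 2 * S * Real.exp (b*u + a*v) * |ε| := by
    have h := auxA (b*c + a*d) key2'
    have he : 2 * S * Real.exp (b*u + a*v) * |ε| = 2 * (S * (Real.exp (b*u + a*v) * |ε|)) := by
      ring
    linarith
  have hcb : b * |c| ≤ 2 * S * Real.exp (b*u + a*v) * |ε| + 2 * |a| * S * Real.exp v * |ε| := by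
    have h1 : |b*c| ≤ |b*c + a*d| + |a*d| := by
      calc |b*c| = |(b*c + a*d) - a*d| := by ring_nf
      _ ≤ |b*c + a*d| + |a*d| := abs_sub _ _
    have h2 : |a*d| ≤ |a| * (2 * S * Real.exp v * |ε|) := by
      rw [abs_mul]
      exact mul_le_mul_of_nonneg_left (le_of_lt hdbound) (abs_nonneg a)
    have h3 : |b*c| = b * |c| := by rw [abs_mul, abs_of_pos hb]
    have h4 : |a| * (2 * S * Real.exp v * |ε|) = 2 * |a| * S * Real.exp v * |ε| := by ring
    linarith
  have hcbound : |c| ≤ (1 / b) * (2 * S * Real.exp (b*u + a*v) * |ε| +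
      2 * |a| * S * Real.exp v * |ε|) := by
    rw [one_div, inv_mul_eq_div, le_div_iff₀ hb]
    linarith [mul_comm |c| b]
  have hdC : 2 * S * Real.exp v * |ε| ≤ 2 * S / C := by
    have : S * (Real.exp v * |ε|) ≤ S / C := le_of_lt hSev
    calc 2 * S * Real.exp v * |ε| = 2 * (S * (Real.exp v * |ε|)) := by ring
    _ ≤ 2 * (S / C) := by linarith
    _ = 2 * S / C := by ring
  have hcC : |c| ≤ 2 * S * (1 + |a|) / (C * b) := by
    have h4 : 2 * |a| * S * Real.exp v * |ε| ≤ 2 * |a| * (S / C) := by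
      have h4' := mul_le_mul_of_nonneg_left (le_of_lt hSev) (by positivity : (0:ℝ) ≤ 2 * |a|)
      have he : 2 * |a| * S * Real.exp v * |ε| = 2 * |a| * (S * (Real.exp v * |ε|)) := by ring
      linarith
    have h5 : 2 * S * Real.exp (b*u + a*v) * |ε| ≤ 2 * (S / C) := by
      have he : 2 * S * Real.exp (b*u + a*v) * |ε| =
          2 * (S * (Real.exp (b*u + a*v) * |ε|)) := by ring
      linarith
    have h6 : (0:ℝ) < 1 / b := by positivity
    calc |c| ≤ (1 / b) * (2 * S * Real.exp (b*u + a*v) * |ε| +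
        2 * |a| * S * Real.exp v * |ε|) := hcbound
    _ ≤ (1 / b) * (2 * (S / C) + 2 * |a| * (S / C)) := by
        apply mul_le_mul_of_nonneg_left _ (le_of_lt h6)
        linarith
    _ = 2 * S * (1 + |a|) / (C * b) := by field_simp
  have hdC' : |d| ≤ 2 * S / C := le_of_lt (lt_of_lt_of_le hdbound hdC)
  refine ⟨hdbound, hdC, hcbound, hcC, ?_, ?_⟩
  · calc ‖(c : ℂ) + (d : ℂ) * Complex.I‖
        ≤ ‖(c : ℂ)‖ + ‖(d : ℂ) * Complex.I‖ := norm_add_le _ _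
    _ = |c| + |d| := by
        rw [norm_mul, Complex.norm_real, Complex.norm_real, Complex.norm_I, mul_one, Real.norm_eq_abs, Real.norm_eq_abs]
    _ ≤ 2 * S * (1 + |a|) / (C * b) + 2 * S / C := by linarith
    _ = (2 * S / C) * (1 + (1 + |a|) / b) := by field_simp; ring
  · intro n m hn1 hn2 hm1 hm2
    have hc2π : |c| ≤ 2 * Real.pi := by
      have h7 : 2 * S * (1 + |a|) / (C * b) ≤ 2 * Real.pi := by
        rw [div_le_iff₀ (by positivity)]
        have h7' : S * (1 + |a|) ≤ C * (Real.pi * b) := by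
          rw [div_le_iff₀ (by positivity)] at hCa
          linarith
        have he : 2 * Real.pi * (C * b) = 2 * (C * (Real.pi * b)) := by ring
        linarith
      linarith
    have hcabs := abs_le.mp hc2π
    have h2π : (0:ℝ) < 2 * Real.pi := by linarith
    have h8 : (m:ℝ) < (n:ℝ) + 2 := by
      have hlt : (m:ℝ) * (2 * Real.pi) < ((n:ℝ) + 2) * (2 * Real.pi) := by
        have := hcabs.2; linarith
      exact lt_of_mul_lt_mul_right hlt h2π.le
    have h9 : (n:ℝ) < (m:ℝ) + 2 := by
      have hlt : (n:ℝ) * (2 * Real.pi) < ((m:ℝ) + 2) * (2 * Real.pi) := by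
        have := hcabs.1; linarith
      exact lt_of_mul_lt_mul_right hlt h2π.le
    have h8' : m < n + 2 := by exact_mod_cast (by push_cast; linarith : (m:ℝ) < ((n + 2 : ℤ) : ℝ))
    have h9' : n < m + 2 := by exact_mod_cast (by push_cast; linarith : (n:ℝ) < ((m + 2 : ℤ) : ℝ))
    rw [abs_le]
    omega
end

section
/- Under the hypotheses of the previous localization (an intersection point of L_α and Φ_ε(L_β) in R₁ = {C|ε| < |z|,|w| < δ}), the leaf parameters α, β satisfy |log(|β|/|α|)| ≤ 2S|ε|·[e^{v}(b + |a|) + e^{bu+av}] (modulo 2πb). In particular, since e^{v} ≤ 1/(C|ε|) and e^{bu+av} ≤ 1/(C|ε|) in R₁, the right-hand side is bounded by a constant times 1/C, independent of ε. -/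
lemma expAux {x η : ℝ} (h2 : η ≤ 1/2) (h : |Real.exp x - 1| ≤ η) : |x| ≤ 2*η := by
  have h0 : 0 ≤ η := le_trans (abs_nonneg _) h
  rw [abs_le] at h ⊢
  constructor
  · have h1 : Real.exp (-(2*η)) ≤ 1 - η := by
      have e1 := Real.add_one_le_exp (2*η)
      have e2 : Real.exp (-(2*η)) * Real.exp (2*η) = 1 := by
        rw [← Real.exp_add]; simp
      nlinarith [Real.exp_pos (-(2*η))]
    have h3 : Real.exp (-(2*η)) ≤ Real.exp x := by linarith
    linarith [Real.exp_le_exp.mp h3]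
  · have h3 : Real.exp x ≤ Real.exp (2*η) := by
      have := Real.add_one_le_exp (2*η); linarith
    linarith [Real.exp_le_exp.mp h3]

set_option maxHeartbeats 2000000 in
/-- In the setting of the localization of intersection points of `L_α`
and `Φ_ε(L_β)` in the region `R₁ = {C|ε| < |z|, |w| < δ}` (linear hyperbolic foliation
`z dw − λ w dz = 0`, `λ = a + ib`, `b > 0`, `Φ_ε` moving points by `(α(ε),β(ε)) + O(σ|ε|)`
with the constant `S` as before), the leaf parameters satisfy, modulo `2πb`,
`|log(|β|/|α|)| ≤ 2S|ε|·[e^{v}(b + |a|) + e^{bu+av}]`; and since `e^{v} ≤ 1/(C|ε|)` and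
`e^{bu+av} ≤ 1/(C|ε|)` in `R₁`, the right-hand side is at most `2S(b+|a|+1)/C`,
independently of `ε`. -/
theorem stmt_15 (a b : ℝ) (hb : 0 < b) (S : ℝ) (hS : 0 < S) :
    ∃ C₀ : ℝ, 0 < C₀ ∧
      ∀ C δ σ : ℝ, C₀ ≤ C → 0 < δ → 0 ≤ σ →
      ∀ ε : ℝ, ε ≠ 0 →
      ∀ (Φ : ℂ × ℂ → ℂ × ℂ) (αε βε : ℂ),
        (∀ p : ℂ × ℂ, ‖p.1‖ ≤ δ → ‖p.2‖ ≤ δ →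
          ‖(Φ p).1 - (p.1 + αε)‖ ≤ σ * |ε| ∧
          ‖(Φ p).2 - (p.2 + βε)‖ ≤ σ * |ε|) →
        |ε| / S < ‖αε‖ - σ * |ε| →
        |ε| / S < ‖βε‖ - σ * |ε| →
        ‖αε‖ + σ * |ε| < S * |ε| →
        ‖βε‖ + σ * |ε| < S * |ε| →
      ∀ α β : ℂ,
        Real.exp (-(2 * Real.pi * b)) ≤ ‖α‖ → ‖α‖ < 1 →
        Real.exp (-(2 * Real.pi * b)) ≤ ‖β‖ → ‖β‖ < 1 →
      ∀ u v c d : ℝ, ∀ z w z' w' : ℂ,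
        z = Complex.exp (Complex.I * (((u : ℂ) + (v : ℂ) * Complex.I) +
              ((Real.log (‖α‖) / b : ℝ) : ℂ))) →
        w = α * Complex.exp (Complex.I * ((a : ℂ) + (b : ℂ) * Complex.I) *
              (((u : ℂ) + (v : ℂ) * Complex.I) +
                ((Real.log (‖α‖) / b : ℝ) : ℂ))) →
        z' = Complex.exp (Complex.I * ((((u + c : ℝ) : ℂ) + ((v + d : ℝ) : ℂ) * Complex.I) +
              ((Real.log (‖β‖) / b : ℝ) : ℂ))) →
        w' = β * Complex.exp (Complex.I * ((a : ℂ) + (b : ℂ) * Complex.I) *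
              ((((u + c : ℝ) : ℂ) + ((v + d : ℝ) : ℂ) * Complex.I) +
                ((Real.log (‖β‖) / b : ℝ) : ℂ))) →
        C * |ε| < ‖z‖ → ‖z‖ < δ →
        C * |ε| < ‖w‖ → ‖w‖ < δ →
        ‖z'‖ ≤ δ → ‖w'‖ ≤ δ →
        (z, w) = Φ (z', w') →
        (∃ k : ℤ, |Real.log (‖β‖ / ‖α‖) - 2 * Real.pi * b * (k : ℝ)| ≤
            2 * S * |ε| * (Real.exp v * (b + |a|) + Real.exp (b * u + a * v))) ∧
        2 * S * |ε| * (Real.exp v * (b + |a|) + Real.exp (b * u + a * v)) ≤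
          2 * S * (b + |a| + 1) / C := by
  refine ⟨10 * S, by positivity, ?_⟩
  intro C δ σ hC hδ hσ ε hε Φ αε βε hΦ hα1 hβ1 hα2 hβ2 α β hαlo hαhi hβlo hβhi
  intro u v c d z w z' w' hz hw hz' hw' hzlo hzhi hwlo hwhi hz'δ hw'δ hint
  have hε' : (0:ℝ) < |ε| := abs_pos.mpr hε
  have hC0 : (0:ℝ) < C := lt_of_lt_of_le (by positivity) hC
  have hαpos : (0:ℝ) < ‖α‖ := lt_of_lt_of_le (Real.exp_pos _) hαlo
  have hβpos : (0:ℝ) < ‖β‖ := lt_of_lt_of_le (Real.exp_pos _) hβlo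
  have hbne : b ≠ 0 := hb.ne'
  have hbC : (b:ℂ) ≠ 0 := by exact_mod_cast hbne
  set Lα := Real.log (‖α‖) with hLα
  set Lβ := Real.log (‖β‖) with hLβ
  have hexpid : ∀ x : ℝ, Real.exp (-x) * Real.exp x = 1 := by
    intro x; rw [← Real.exp_add]; simp
  -- moduli
  have habsz : ‖z‖ = Real.exp (-v) := by
    rw [hz, Complex.norm_exp]; congr 1
    simp [Complex.mul_re, Complex.add_re, Complex.add_im, Complex.mul_im]
  have habsz' : ‖z'‖ = Real.exp (-(v + d)) := by
    rw [hz', Complex.norm_exp]; congr 1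
    simp [Complex.mul_re, Complex.add_re, Complex.add_im, Complex.mul_im]
  have habsw : ‖w‖ = Real.exp (-(b * u + a * v)) := by
    rw [hw, norm_mul, Complex.norm_exp]
    have hre : (Complex.I * ((a:ℂ) + (b:ℂ) * Complex.I) *
        (((u : ℂ) + (v : ℂ) * Complex.I) + ((Lα / b : ℝ) : ℂ))).re
        = -(b * u + a * v) - Lα := by
      simp [Complex.mul_re, Complex.add_re, Complex.add_im, Complex.mul_im]
      field_simp
      ring
    rw [hre, ← Real.exp_log hαpos, ← hLα, ← Real.exp_add]
    ring_nf
  have habsw' : ‖w'‖ = Real.exp (-(b * (u + c) + a * (v + d))) := by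
    rw [hw', norm_mul, Complex.norm_exp]
    have hre : (Complex.I * ((a:ℂ) + (b:ℂ) * Complex.I) *
        ((((u + c : ℝ) : ℂ) + ((v + d : ℝ) : ℂ) * Complex.I) + ((Lβ / b : ℝ) : ℂ))).re
        = -(b * (u + c) + a * (v + d)) - Lβ := by
      simp [Complex.mul_re, Complex.add_re, Complex.add_im, Complex.mul_im]
      field_simp
      ring
    rw [hre, ← Real.exp_log hβpos, ← hLβ, ← Real.exp_add]
    ring_nf
  -- intersection displacement
  obtain ⟨hd1, hd2⟩ := hΦ (z', w') hz'δ hw'δ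
  rw [← hint] at hd1 hd2
  replace hd1 : ‖z - (z' + αε)‖ ≤ σ * |ε| := hd1
  replace hd2 : ‖w - (w' + βε)‖ ≤ σ * |ε| := hd2
  have hzz' : ‖z' - z‖ ≤ S * |ε| := by
    rw [norm_sub_rev]
    calc ‖z - z'‖ ≤ ‖z - (z' + αε)‖ + ‖αε‖ := by
          have h := norm_add_le (z - (z' + αε)) αε
          have e : z - (z' + αε) + αε = z - z' := by ring
          rwa [e] at h
      _ ≤ S * |ε| := by linarith only [hd1, hα2]
  have hww' : ‖w' - w‖ ≤ S * |ε| := by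
    rw [norm_sub_rev]
    calc ‖w - w'‖ ≤ ‖w - (w' + βε)‖ + ‖βε‖ := by
          have h := norm_add_le (w - (w' + βε)) βε
          have e : w - (w' + βε) + βε = w - w' := by ring
          rwa [e] at h
      _ ≤ S * |ε| := by linarith only [hd2, hβ2]
  -- smallness of η, ηw
  set η : ℝ := S * |ε| * Real.exp v with hη_def
  set ηw : ℝ := S * |ε| * Real.exp (b * u + a * v) with hηw_def
  have hη0 : 0 ≤ η := by positivity
  have hηw0 : 0 ≤ ηw := by positivity
  have hzC : |ε| * Real.exp v * C < 1 := by
    have h := mul_lt_mul_of_pos_right hzlo (Real.exp_pos v)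
    rw [habsz, hexpid v] at h
    exact lt_of_eq_of_lt (by ring : |ε| * Real.exp v * C = C * |ε| * Real.exp v) h
  have hwC : |ε| * Real.exp (b * u + a * v) * C < 1 := by
    have h := mul_lt_mul_of_pos_right hwlo (Real.exp_pos (b * u + a * v))
    rw [habsw, hexpid (b * u + a * v)] at h
    exact lt_of_eq_of_lt (by ring) h
  have hη10 : η ≤ 1/10 := by
    have h1 : |ε| * Real.exp v * (10 * S) ≤ |ε| * Real.exp v * C :=
      mul_le_mul_of_nonneg_left hC (by positivity)
    have h2 : |ε| * Real.exp v * (10 * S) < 1 := lt_of_le_of_lt h1 hzC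
    have h3 : η = |ε| * Real.exp v * (10 * S) / 10 := by rw [hη_def]; ring
    rw [h3]; linarith only [h2]
  have hηw10 : ηw ≤ 1/10 := by
    have h1 : |ε| * Real.exp (b * u + a * v) * (10 * S) ≤ |ε| * Real.exp (b * u + a * v) * C :=
      mul_le_mul_of_nonneg_left hC (by positivity)
    have h2 : |ε| * Real.exp (b * u + a * v) * (10 * S) < 1 := lt_of_le_of_lt h1 hwC
    have h3 : ηw = |ε| * Real.exp (b * u + a * v) * (10 * S) / 10 := by rw [hηw_def]; ring
    rw [h3]; linarith only [h2]
  -- second conjunct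
  have hsecond : 2 * S * |ε| * (Real.exp v * (b + |a|) + Real.exp (b * u + a * v)) ≤
      2 * S * (b + |a| + 1) / C := by
    rw [le_div_iff₀ hC0]
    have t1 : |ε| * Real.exp v * C * (b + |a|) ≤ 1 * (b + |a|) :=
      mul_le_mul_of_nonneg_right hzC.le (by positivity)
    have t2 : |ε| * Real.exp (b * u + a * v) * C ≤ 1 := hwC.le
    calc 2 * S * |ε| * (Real.exp v * (b + |a|) + Real.exp (b * u + a * v)) * C
        = 2 * S * (|ε| * Real.exp v * C * (b + |a|) + |ε| * Real.exp (b * u + a * v) * C) := by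
          ring
      _ ≤ 2 * S * ((b + |a|) + 1) := by
          have hsum : |ε| * Real.exp v * C * (b + |a|) + |ε| * Real.exp (b * u + a * v) * C
              ≤ (b + |a|) + 1 := by linarith only [t1, t2]
          exact mul_le_mul_of_nonneg_left hsum (by positivity)
      _ = 2 * S * (b + |a| + 1) := by ring
  refine ⟨?_, hsecond⟩
  -- z-ratio
  set s : ℝ := c + (Lβ - Lα) / b with hs_def
  have hratio : z' = z * Complex.exp (-(d:ℂ) + (s:ℂ) * Complex.I) := by
    rw [hz, hz', ← Complex.exp_add]
    congr 1
    rw [hs_def]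
    push_cast
    field_simp
    linear_combination ((d:ℂ) * (b:ℂ)) * Complex.I_sq
  set E : ℂ := Complex.exp (-(d:ℂ) + (s:ℂ) * Complex.I) with hE_def
  have hEabs : ‖E‖ = Real.exp (-d) := by
    rw [hE_def, Complex.norm_exp]; congr 1; simp
  have hEre : E.re = Real.exp (-d) * Real.cos s := by
    rw [hE_def, Complex.exp_re]; congr 2 <;> simp
  have hEim : E.im = Real.exp (-d) * Real.sin s := by
    rw [hE_def, Complex.exp_im]; congr 2 <;> simp
  have hkey : ‖E - 1‖ ≤ η := by
    have h1 : ‖z' - z‖ = Real.exp (-v) * ‖E - 1‖ := by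
      rw [hratio, ← habsz, ← norm_mul]; congr 1; ring
    rw [h1] at hzz'
    have h2 := hexpid v
    have h3 := mul_le_mul_of_nonneg_right hzz' (Real.exp_pos v).le
    rw [hη_def]
    calc ‖E - 1‖
        = Real.exp (-v) * ‖E - 1‖ * Real.exp v := by
          linear_combination (-(‖E - 1‖)) * h2
      _ ≤ S * |ε| * Real.exp v := h3
  have hd_abs : |d| ≤ 2 * η := by
    have h1 : |Real.exp (-d) - 1| ≤ η := by
      have h := abs_norm_sub_norm_le E 1
      simp only [norm_one] at h
      rw [hEabs] at h
      exact h.trans hkey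
    have h2 := expAux (by linarith) h1
    rwa [abs_neg] at h2
  have hexp_d : (4:ℝ)/5 ≤ Real.exp (-d) := by
    have h1 := Real.add_one_le_exp (-d)
    have h2 := abs_le.mp hd_abs
    linarith only [h1, h2.2, hη10]
  have hsin : |Real.sin s| ≤ 5/4 * η := by
    have h1 : |E.im| ≤ η := by
      have h2 : (E - 1).im = E.im := by simp
      have h := Complex.abs_im_le_norm (E - 1)
      rw [h2] at h
      exact h.trans hkey
    rw [hEim, abs_mul, abs_of_pos (Real.exp_pos (-d))] at h1
    have h4 := mul_le_mul_of_nonneg_right hexp_d (abs_nonneg (Real.sin s))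
    linarith only [h1, h4]
  have hcos : 0 < Real.cos s := by
    have h1 : -η ≤ (E - 1).re := by
      have h := Complex.abs_re_le_norm (E - 1)
      have h2 := (abs_le.mp (h.trans hkey)).1
      linarith
    have h2 : (E - 1).re = Real.exp (-d) * Real.cos s - 1 := by
      rw [Complex.sub_re, hEre]; simp
    rw [h2] at h1
    by_contra hcon
    push_neg at hcon
    have h4 : Real.exp (-d) * Real.cos s ≤ Real.exp (-d) * 0 :=
      mul_le_mul_of_nonneg_left hcon (Real.exp_pos (-d)).le
    rw [mul_zero] at h4
    linarith only [h1, h4, hη10]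
  -- choose k
  have hπ := Real.pi_pos
  set k : ℤ := round (s / (2 * Real.pi)) with hk_def
  refine ⟨k, ?_⟩
  set s₀ : ℝ := s - 2 * Real.pi * (k:ℝ) with hs₀_def
  have hs₀π : |s₀| ≤ Real.pi := by
    have h1 := abs_sub_round (s / (2 * Real.pi))
    have h2 : s₀ = (s / (2 * Real.pi) - (k:ℝ)) * (2 * Real.pi) := by
      rw [hs₀_def]; field_simp
    rw [h2, abs_mul, abs_of_pos (by linarith only [hπ] : (0:ℝ) < 2 * Real.pi)]
    calc |s / (2 * Real.pi) - (k:ℝ)| * (2 * Real.pi) ≤ (1/2) * (2 * Real.pi) :=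
          mul_le_mul_of_nonneg_right h1 (by linarith only [hπ])
      _ = Real.pi := by ring
  have hsin0 : Real.sin s₀ = Real.sin s := by
    have h : s₀ = s - (k:ℝ) * (2 * Real.pi) := by rw [hs₀_def]; ring
    rw [h, Real.sin_sub_int_mul_two_pi]
  have hcos0 : Real.cos s₀ = Real.cos s := by
    have h : s₀ = s - (k:ℝ) * (2 * Real.pi) := by rw [hs₀_def]; ring
    rw [h, Real.cos_sub_int_mul_two_pi]
  have hs₀half : |s₀| ≤ Real.pi / 2 := by
    by_contra hcon
    push_neg at hcon
    have h1 : Real.cos |s₀| ≤ 0 :=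
      Real.cos_nonpos_of_pi_div_two_le_of_le hcon.le (by linarith only [hs₀π, hπ])
    rw [Real.cos_abs, hcos0] at h1
    linarith only [h1, hcos]
  have hjordan := Real.mul_le_sin (abs_nonneg s₀) hs₀half
  have hsinabs : Real.sin |s₀| ≤ |Real.sin s₀| := by
    rcases abs_cases s₀ with ⟨h1, _⟩ | ⟨h1, _⟩
    · rw [h1]; exact le_abs_self _
    · rw [h1, Real.sin_neg]; exact neg_le_abs _
  have hs₀η : |s₀| ≤ 2 * η := by
    have h1 : |Real.sin s₀| ≤ 5/4 * η := by rw [hsin0]; exact hsin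
    have h2 : 2 / Real.pi * |s₀| ≤ 5/4 * η := le_trans hjordan (le_trans hsinabs h1)
    have h3 := mul_le_mul_of_nonneg_right h2 hπ.le
    have h4 : 2 / Real.pi * |s₀| * Real.pi = 2 * |s₀| := by field_simp
    rw [h4] at h3
    have h5 : Real.pi < 3.15 := Real.pi_lt_d2
    have h6 : 5/4 * η * Real.pi ≤ 5/4 * η * 3.15 :=
      mul_le_mul_of_nonneg_left h5.le (by linarith only [hη0])
    linarith only [h3, h6, hη0]
  -- w side
  have hX : |b * c + a * d| ≤ 2 * ηw := by
    have h1 : |‖w'‖ - ‖w‖| ≤ S * |ε| :=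
      le_trans (abs_norm_sub_norm_le w' w) hww'
    rw [habsw, habsw'] at h1
    have h2 : Real.exp (-(b * (u + c) + a * (v + d)))
        = Real.exp (-(b * c + a * d)) * Real.exp (-(b * u + a * v)) := by
      rw [← Real.exp_add]; ring_nf
    rw [h2] at h1
    have hid := hexpid (b * u + a * v)
    have h5 : |Real.exp (-(b * c + a * d)) - 1| ≤ ηw := by
      calc |Real.exp (-(b * c + a * d)) - 1|
          = |Real.exp (-(b * c + a * d)) - 1|
              * (Real.exp (-(b * u + a * v)) * Real.exp (b * u + a * v)) := by
            rw [hid, mul_one]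
        _ = (|Real.exp (-(b * c + a * d)) - 1| * Real.exp (-(b * u + a * v)))
              * Real.exp (b * u + a * v) := by ring
        _ = |(Real.exp (-(b * c + a * d)) - 1) * Real.exp (-(b * u + a * v))|
              * Real.exp (b * u + a * v) := by
            rw [abs_mul, abs_of_pos (Real.exp_pos _)]
        _ = |Real.exp (-(b * c + a * d)) * Real.exp (-(b * u + a * v))
              - Real.exp (-(b * u + a * v))| * Real.exp (b * u + a * v) := by
            congr 1; congr 1; ring
        _ ≤ S * |ε| * Real.exp (b * u + a * v) :=
            mul_le_mul_of_nonneg_right h1 (Real.exp_pos _).le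
    have h6 := expAux (by linarith) h5
    rwa [abs_neg] at h6
  -- final assembly
  have hT : Real.log (‖β‖ / ‖α‖) - 2 * Real.pi * b * (k:ℝ)
      = b * s₀ + a * d - (b * c + a * d) := by
    rw [Real.log_div hβpos.ne' hαpos.ne', ← hLα, ← hLβ, hs₀_def, hs_def]
    field_simp
    ring
  rw [hT]
  have t1 : |b * s₀ + a * d - (b * c + a * d)| ≤ |b * s₀| + |a * d| + |b * c + a * d| := by
    calc |b * s₀ + a * d - (b * c + a * d)|
        = |(b * s₀ + a * d) + (-(b * c + a * d))| := by ring_nf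
      _ ≤ |b * s₀ + a * d| + |(-(b * c + a * d))| := abs_add_le _ _
      _ ≤ (|b * s₀| + |a * d|) + |b * c + a * d| := by
          rw [abs_neg]; exact add_le_add_left (abs_add_le _ _) _
  rw [abs_mul, abs_mul, abs_of_pos hb] at t1
  have e : 2 * S * |ε| * (Real.exp v * (b + |a|) + Real.exp (b * u + a * v))
      = b * (2 * η) + |a| * (2 * η) + 2 * ηw := by
    rw [hη_def, hηw_def]; ring
  rw [e]
  have m1 := mul_le_mul_of_nonneg_left hs₀η hb.le
  have m2 := mul_le_mul_of_nonneg_left hd_abs (abs_nonneg a)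
  linarith only [t1, m1, m2, hX]
end
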